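/- arXiv:2311.13271 — 2 statements merged into one kernel-verified Lean document; each statement's English description precedes it below -/
import Mathlib

section
/- Let s ∈ (0,1), H an open affine half-space in R^N, and φ ∈ H^s(R^N) nonnegative. Then ||φ_H||_{H^s(R^N)} ≤ ||φ||_{H^s(R^N)}, where ||u||²_{H^s} = ||u||²_{L²} + [u]_s². In particular φ_H ∈ H^s(R^N). -/
open MeasureTheory Set
open scoped ENNReal
noncomputable section

/-- Euclidean space `ℝ^N`. -/
abbrev Euc (N : ℕ) := EuclideanSpace ℝ (Fin N)

/-- Reflection `σ_H` across the hyperplane `∂H = {x | ⟪a, x⟫ = c}` (for a unit vector `a`). -/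
def reflectH {N : ℕ} (a : Euc N) (c : ℝ) (x : Euc N) : Euc N :=
  x - (2 * ((inner ℝ a x : ℝ) - c)) • a

/-- The open affine half-space `H = {x | ⟪a, x⟫ > c}`. -/
def halfSpace {N : ℕ} (a : Euc N) (c : ℝ) : Set (Euc N) :=
  {x | c < (inner ℝ a x : ℝ)}

/-- Polarization `Ω_H = ((Ω ∪ σ_H(Ω)) ∩ H) ∪ (Ω ∩ σ_H(Ω))` of a set `Ω`. -/
def polSet {N : ℕ} (a : Euc N) (c : ℝ) (Ω : Set (Euc N)) : Set (Euc N) :=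
  ((Ω ∪ reflectH a c '' Ω) ∩ halfSpace a c) ∪ (Ω ∩ reflectH a c '' Ω)

/-- Polarization `f_H` of a function: `max(f, f∘σ_H)` on `H`, `min(f, f∘σ_H)` on `H^c`. -/
def polFun {N : ℕ} (a : Euc N) (c : ℝ) (f : Euc N → ℝ) (x : Euc N) : ℝ :=
  if c < (inner ℝ a x : ℝ) then max (f x) (f (reflectH a c x))
  else min (f x) (f (reflectH a c x))

/-- Square of the Gagliardo seminorm `[u]_s²`. -/
def gagliardo2 (N : ℕ) (s : ℝ) (u : Euc N → ℝ) : ℝ :=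
  ∫ p : Euc N × Euc N, (u p.1 - u p.2) ^ 2 / ‖p.1 - p.2‖ ^ ((N : ℝ) + 2 * s)

/-- Finiteness of the Gagliardo seminorm. -/
def gagliardoFinite (N : ℕ) (s : ℝ) (u : Euc N → ℝ) : Prop :=
  Integrable (fun p : Euc N × Euc N => (u p.1 - u p.2) ^ 2 / ‖p.1 - p.2‖ ^ ((N : ℝ) + 2 * s))

/-- Membership in the fractional Sobolev space `H^s(ℝ^N)`. -/
def memHs (N : ℕ) (s : ℝ) (u : Euc N → ℝ) : Prop :=
  MemLp u 2 (volume : Measure (Euc N)) ∧ gagliardoFinite N s u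

/-- Membership in `H^s_0(Ω) = {u ∈ H^s(ℝ^N) : u = 0 in Ω^c}`. -/
def memHs0 (N : ℕ) (s : ℝ) (Ω : Set (Euc N)) (u : Euc N → ℝ) : Prop :=
  memHs N s u ∧ ∀ x ∉ Ω, u x = 0

section Basic
variable {N : ℕ} {a : Euc N} {c : ℝ} (ha : ‖a‖ = 1)

include ha in
lemma inner_self_one : (inner ℝ a a : ℝ) = 1 := by
  rw [real_inner_self_eq_norm_mul_norm, ha]; norm_num

include ha in
lemma inner_reflect (x : Euc N) : (inner ℝ a (reflectH a c x) : ℝ) = 2 * c - inner ℝ a x := by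
  rw [reflectH, inner_sub_right, real_inner_smul_right, inner_self_one ha]; ring

include ha in
lemma reflect_reflect (x : Euc N) : reflectH a c (reflectH a c x) = x := by
  rw [reflectH, inner_reflect ha, reflectH]
  module

include ha in
lemma norm_sub_reflect_sq (x y : Euc N) :
    ‖x - reflectH a c y‖ ^ 2
      = ‖x - y‖ ^ 2 + 4 * ((inner ℝ a x : ℝ) - c) * ((inner ℝ a y : ℝ) - c) := by
  have h : x - reflectH a c y = (x - y) + (2 * ((inner ℝ a y : ℝ) - c)) • a := by
    rw [reflectH]; module
  rw [h, norm_add_sq_real, real_inner_smul_right, inner_sub_left, real_inner_comm x a,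
    real_inner_comm y a, norm_smul, ha, mul_one, Real.norm_eq_abs, sq_abs]
  ring

include ha in
lemma norm_reflect_sub_reflect (x y : Euc N) :
    ‖reflectH a c x - reflectH a c y‖ = ‖x - y‖ := by
  have h : reflectH a c x - reflectH a c y
      = (x - y) - (2 * ((inner ℝ a (x - y) : ℝ))) • a := by
    rw [reflectH, reflectH, inner_sub_right]; module
  have h2 : ‖reflectH a c x - reflectH a c y‖ ^ 2 = ‖x - y‖ ^ 2 := by
    rw [h, norm_sub_sq_real, real_inner_smul_right, real_inner_comm (x - y) a, norm_smul, ha,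
      mul_one, Real.norm_eq_abs, sq_abs]
    ring
  have h3 := norm_nonneg (reflectH a c x - reflectH a c y)
  have h4 := norm_nonneg (x - y)
  have := congrArg Real.sqrt h2
  rwa [Real.sqrt_sq h3, Real.sqrt_sq h4] at this

include ha in
lemma norm_sub_reflect_comm (x y : Euc N) :
    ‖x - reflectH a c y‖ = ‖reflectH a c x - y‖ := by
  rw [← norm_reflect_sub_reflect ha x (reflectH a c y), reflect_reflect ha]

end Basic

section MeasureStuff
variable {N : ℕ} {a : Euc N} {c : ℝ} (ha : ‖a‖ = 1)

lemma continuous_reflect : Continuous (reflectH a c) := by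
  unfold reflectH
  exact continuous_id.sub
    ((continuous_const.mul ((continuous_const.inner (𝕜 := ℝ) continuous_id).sub continuous_const)).smul
      continuous_const)

/-- The linear reflection (c = 0) as a linear isometry equivalence. -/
def reflLIE (ha : ‖a‖ = 1) : Euc N ≃ₗᵢ[ℝ] Euc N where
  toLinearEquiv := LinearEquiv.ofInvolutive
    { toFun := reflectH a 0
      map_add' := by intro x y; simp only [reflectH, inner_add_right, sub_zero]; module
      map_smul' := by intro m x; simp only [reflectH, real_inner_smul_right, sub_zero,
        RingHom.id_apply]; module }
    (fun x => reflect_reflect ha x)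
  norm_map' := by
    intro x
    have h0 : reflectH a 0 (0 : Euc N) = 0 := by simp [reflectH]
    have := norm_reflect_sub_reflect (c := 0) ha x 0
    rw [h0, sub_zero, sub_zero] at this
    exact this

lemma measurePreserving_reflect (ha : ‖a‖ = 1) :
    MeasurePreserving (reflectH a c) (volume : Measure (Euc N)) volume := by
  have h : reflectH a c = (fun x => x + (2 * c) • a) ∘ (reflLIE ha) := by
    funext x
    show reflectH a c x = reflectH a 0 x + (2 * c) • a
    rw [reflectH, reflectH]; module
  rw [h]
  exact (measurePreserving_add_right volume ((2 * c) • a)).comp (reflLIE ha).measurePreserving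

/-- Reflection as a measurable equivalence. -/
def reflME (ha : ‖a‖ = 1) (c : ℝ) : Euc N ≃ᵐ Euc N where
  toFun := reflectH a c
  invFun := reflectH a c
  left_inv := reflect_reflect ha
  right_inv := reflect_reflect ha
  measurable_toFun := continuous_reflect.measurable
  measurable_invFun := continuous_reflect.measurable

include ha in
lemma hyperplane_null : volume {x : Euc N | (inner ℝ a x : ℝ) = c} = 0 := by
  set K : Submodule ℝ (Euc N) := LinearMap.ker ((innerSL ℝ a).toLinearMap) with hKdef
  have hK : K ≠ ⊤ := by
    intro h
    have : a ∈ K := h ▸ Submodule.mem_top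
    rw [hKdef, LinearMap.mem_ker] at this
    simp only [ContinuousLinearMap.coe_coe, innerSL_apply_apply] at this
    rw [inner_self_one ha] at this
    norm_num at this
  have hK0 : volume (K : Set (Euc N)) = 0 := Measure.addHaar_submodule volume K hK
  have hset : {x : Euc N | (inner ℝ a x : ℝ) = c} = (fun x => x + (-(c • a))) ⁻¹' K := by
    ext x
    simp only [Set.mem_setOf_eq, Set.mem_preimage, SetLike.mem_coe, hKdef, LinearMap.mem_ker,
      ContinuousLinearMap.coe_coe, innerSL_apply_apply, inner_add_right, inner_neg_right,
      real_inner_smul_right, inner_self_one ha]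
    constructor <;> intro h <;> linarith
  rw [hset, measure_preimage_add_right]
  exact hK0

lemma ae_fst {P : Euc N → Prop} (h : ∀ᵐ x : Euc N, P x) :
    ∀ᵐ p : Euc N × Euc N, P p.1 := by
  rw [ae_iff] at h ⊢
  obtain ⟨T, hsub, hTm, hT0⟩ := exists_measurable_superset_of_null h
  refine measure_mono_null (t := Prod.fst ⁻¹' T) (fun p hp => (hsub hp : p.1 ∈ T)) ?_
  · show volume (Prod.fst ⁻¹' T) = 0
    rw [← Set.prod_univ, Measure.volume_eq_prod, Measure.prod_prod, hT0, zero_mul]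

lemma ae_snd {P : Euc N → Prop} (h : ∀ᵐ x : Euc N, P x) :
    ∀ᵐ p : Euc N × Euc N, P p.2 := by
  rw [ae_iff] at h ⊢
  obtain ⟨T, hsub, hTm, hT0⟩ := exists_measurable_superset_of_null h
  refine measure_mono_null (t := Prod.snd ⁻¹' T) (fun p hp => (hsub hp : p.2 ∈ T)) ?_
  · show volume (Prod.snd ⁻¹' T) = 0
    rw [← Set.univ_prod, Measure.volume_eq_prod, Measure.prod_prod, hT0, mul_zero]

include ha in
lemma offH_ae : ∀ᵐ p : Euc N × Euc N, (inner ℝ a p.1 : ℝ) ≠ c ∧ (inner ℝ a p.2 : ℝ) ≠ c := by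
  have h : ∀ᵐ x : Euc N, (inner ℝ a x : ℝ) ≠ c := by
    rw [ae_iff]
    simpa using hyperplane_null ha (c := c)
  exact (ae_fst h).and (ae_snd h)

end MeasureStuff

/-- Core algebraic inequality for polarization. -/
lemma pol_core (u U v V k1 k2 : ℝ) (hk2 : 0 ≤ k2) (hk : k2 ≤ k1) :
    (max u U - max v V) ^ 2 * k1 + (min u U - min v V) ^ 2 * k1
      + (max u U - min v V) ^ 2 * k2 + (min u U - max v V) ^ 2 * k2
    ≤ (u - v) ^ 2 * k1 + (U - V) ^ 2 * k1 + (u - V) ^ 2 * k2 + (U - v) ^ 2 * k2 := by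
  rcases le_total u U with h1 | h1 <;> rcases le_total v V with h2 | h2 <;>
    simp only [max_eq_right h1, min_eq_left h1, max_eq_left h1, min_eq_right h1,
      max_eq_right h2, min_eq_left h2, max_eq_left h2, min_eq_right h2] <;>
    nlinarith [mul_nonneg (mul_nonneg (sub_nonneg.2 hk) (sub_nonneg.2 h1)) (sub_nonneg.2 h2),
      mul_nonneg (mul_nonneg (sub_nonneg.2 hk) (sub_nonneg.2 h1)) (sub_nonneg.2 h2),
      sq_nonneg (u - v), sq_nonneg (U - V), sq_nonneg (u - V), sq_nonneg (U - v)]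

section Transforms
variable {N : ℕ} {a : Euc N} {c : ℝ} (ha : ‖a‖ = 1)

/-- `(x, y) ↦ (σx, y)`. -/
def T1 (ha : ‖a‖ = 1) (c : ℝ) : (Euc N × Euc N) ≃ᵐ (Euc N × Euc N) :=
  (reflME ha c).prodCongr (MeasurableEquiv.refl _)

/-- `(x, y) ↦ (x, σy)`. -/
def T2 (ha : ‖a‖ = 1) (c : ℝ) : (Euc N × Euc N) ≃ᵐ (Euc N × Euc N) :=
  (MeasurableEquiv.refl _).prodCongr (reflME ha c)

/-- `(x, y) ↦ (σx, σy)`. -/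
def T3 (ha : ‖a‖ = 1) (c : ℝ) : (Euc N × Euc N) ≃ᵐ (Euc N × Euc N) :=
  (reflME ha c).prodCongr (reflME ha c)

lemma T1_apply (p : Euc N × Euc N) : T1 ha c p = (reflectH a c p.1, p.2) := rfl
lemma T2_apply (p : Euc N × Euc N) : T2 ha c p = (p.1, reflectH a c p.2) := rfl
lemma T3_apply (p : Euc N × Euc N) : T3 ha c p = (reflectH a c p.1, reflectH a c p.2) := rfl

lemma mp_T1 : MeasurePreserving (T1 ha c) volume volume := by
  rw [Measure.volume_eq_prod]
  exact (measurePreserving_reflect ha).prod (MeasurePreserving.id _)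

lemma mp_T2 : MeasurePreserving (T2 ha c) volume volume := by
  rw [Measure.volume_eq_prod]
  exact (MeasurePreserving.id _).prod (measurePreserving_reflect ha)

lemma mp_T3 : MeasurePreserving (T3 ha c) volume volume := by
  rw [Measure.volume_eq_prod]
  exact (measurePreserving_reflect ha).prod (measurePreserving_reflect ha)

end Transforms

/-- The Gagliardo integrand. -/
def Fker (N : ℕ) (s : ℝ) (u : Euc N → ℝ) (p : Euc N × Euc N) : ℝ :=
  (u p.1 - u p.2) ^ 2 / ‖p.1 - p.2‖ ^ ((N : ℝ) + 2 * s)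

/-- Symmetrized Gagliardo integrand. -/
def Gker (N : ℕ) (s : ℝ) (a : Euc N) (c : ℝ) (u : Euc N → ℝ) (p : Euc N × Euc N) : ℝ :=
  Fker N s u p + Fker N s u (reflectH a c p.1, p.2) + Fker N s u (p.1, reflectH a c p.2)
    + Fker N s u (reflectH a c p.1, reflectH a c p.2)

lemma Fker_nonneg (N : ℕ) (s : ℝ) (u : Euc N → ℝ) (p : Euc N × Euc N) : 0 ≤ Fker N s u p :=
  div_nonneg (sq_nonneg _) (Real.rpow_nonneg (norm_nonneg _) _)

lemma Gker_nonneg (N : ℕ) (s : ℝ) (a : Euc N) (c : ℝ) (u : Euc N → ℝ) (p : Euc N × Euc N) :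
    0 ≤ Gker N s a c u p := by
  have h1 := Fker_nonneg N s u p
  have h2 := Fker_nonneg N s u (reflectH a c p.1, p.2)
  have h3 := Fker_nonneg N s u (p.1, reflectH a c p.2)
  have h4 := Fker_nonneg N s u (reflectH a c p.1, reflectH a c p.2)
  unfold Gker; linarith

section KeyPointwise
variable {N : ℕ} {a : Euc N} {c : ℝ} (ha : ‖a‖ = 1)

include ha in
lemma Gker_invL (s : ℝ) (u : Euc N → ℝ) (x y : Euc N) :
    Gker N s a c u (reflectH a c x, y) = Gker N s a c u (x, y) := by
  unfold Gker
  rw [reflect_reflect ha]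
  ring

include ha in
lemma Gker_invR (s : ℝ) (u : Euc N → ℝ) (x y : Euc N) :
    Gker N s a c u (x, reflectH a c y) = Gker N s a c u (x, y) := by
  unfold Gker
  rw [reflect_reflect ha]
  ring

lemma polFun_of_pos (f : Euc N → ℝ) {x : Euc N} (hx : c < (inner ℝ a x : ℝ)) :
    polFun a c f x = max (f x) (f (reflectH a c x)) := if_pos hx

lemma polFun_of_neg (f : Euc N → ℝ) {x : Euc N} (hx : (inner ℝ a x : ℝ) < c) :
    polFun a c f x = min (f x) (f (reflectH a c x)) := if_neg (not_lt.2 hx.le)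

include ha in
lemma polFun_reflect_of_pos (f : Euc N → ℝ) {x : Euc N} (hx : c < (inner ℝ a x : ℝ)) :
    polFun a c f (reflectH a c x) = min (f x) (f (reflectH a c x)) := by
  have h : (inner ℝ a (reflectH a c x) : ℝ) < c := by rw [inner_reflect ha]; linarith
  rw [polFun_of_neg f h, reflect_reflect ha, min_comm]

include ha in
lemma polFun_reflect_of_neg (f : Euc N → ℝ) {x : Euc N} (hx : (inner ℝ a x : ℝ) < c) :
    polFun a c f (reflectH a c x) = max (f x) (f (reflectH a c x)) := by
  have h : c < (inner ℝ a (reflectH a c x) : ℝ) := by rw [inner_reflect ha]; linarith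
  rw [polFun_of_pos f h, reflect_reflect ha, max_comm]

lemma min_sub_max_sq (A B : ℝ) : (min A B - max A B) ^ 2 = (A - B) ^ 2 := by
  rcases le_total A B with h | h <;>
    simp only [min_eq_left h, max_eq_right h, min_eq_right h, max_eq_left h] <;> ring

lemma max_sub_min_sq (A B : ℝ) : (max A B - min A B) ^ 2 = (A - B) ^ 2 := by
  rcases le_total A B with h | h <;>
    simp only [min_eq_left h, max_eq_right h, min_eq_right h, max_eq_left h] <;> ring

lemma sq_max_add_sq_min (A B : ℝ) : max A B ^ 2 + min A B ^ 2 = A ^ 2 + B ^ 2 := by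
  rcases le_total A B with h | h <;>
    simp only [min_eq_left h, max_eq_right h, min_eq_right h, max_eq_left h] <;> ring

include ha in
lemma key_ptwise {s : ℝ} (hβ : 0 < (N : ℝ) + 2 * s) (u : Euc N → ℝ) {x y : Euc N}
    (hx : c < (inner ℝ a x : ℝ)) (hy : c < (inner ℝ a y : ℝ)) :
    Gker N s a c (polFun a c u) (x, y) ≤ Gker N s a c u (x, y) := by
  have hnorm1 : ‖reflectH a c x - reflectH a c y‖ = ‖x - y‖ := norm_reflect_sub_reflect ha x y
  have hnorm2 : ‖reflectH a c x - y‖ = ‖x - reflectH a c y‖ := (norm_sub_reflect_comm ha x y).symm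
  simp only [Gker, Fker, polFun_of_pos u hx, polFun_of_pos u hy, polFun_reflect_of_pos ha u hx,
    polFun_reflect_of_pos ha u hy, hnorm1, hnorm2]
  rcases eq_or_ne x y with rfl | hxy
  · have h0 : ‖x - x‖ ^ ((N : ℝ) + 2 * s) = 0 := by
      rw [sub_self, norm_zero, Real.zero_rpow hβ.ne']
    rw [h0]
    simp only [div_zero]
    rw [min_sub_max_sq, max_sub_min_sq]
    apply le_of_eq
    ring
  · have hk1pos : (0 : ℝ) < ‖x - y‖ ^ ((N : ℝ) + 2 * s) :=
      Real.rpow_pos_of_pos (norm_pos_iff.2 (sub_ne_zero.2 hxy)) _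
    have hle : ‖x - y‖ ≤ ‖x - reflectH a c y‖ := by
      have h1 := norm_sub_reflect_sq (c := c) ha x y
      have h2 : 0 ≤ 4 * ((inner ℝ a x : ℝ) - c) * ((inner ℝ a y : ℝ) - c) := by nlinarith
      nlinarith [norm_nonneg (x - y), norm_nonneg (x - reflectH a c y)]
    have hk12 : ‖x - y‖ ^ ((N : ℝ) + 2 * s) ≤ ‖x - reflectH a c y‖ ^ ((N : ℝ) + 2 * s) :=
      Real.rpow_le_rpow (norm_nonneg _) hle hβ.le
    have hinv : (‖x - reflectH a c y‖ ^ ((N : ℝ) + 2 * s))⁻¹ ≤ (‖x - y‖ ^ ((N : ℝ) + 2 * s))⁻¹ :=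
      inv_anti₀ hk1pos hk12
    have hinv0 : (0 : ℝ) ≤ (‖x - reflectH a c y‖ ^ ((N : ℝ) + 2 * s))⁻¹ :=
      inv_nonneg.2 (Real.rpow_nonneg (norm_nonneg _) _)
    have := pol_core (u x) (u (reflectH a c x)) (u y) (u (reflectH a c y))
      (‖x - y‖ ^ ((N : ℝ) + 2 * s))⁻¹ (‖x - reflectH a c y‖ ^ ((N : ℝ) + 2 * s))⁻¹ hinv0 hinv
    simp only [div_eq_mul_inv]
    linarith

end KeyPointwise

section Machinery
variable {N : ℕ} {a : Euc N} {c : ℝ} (ha : ‖a‖ = 1)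

include ha in
lemma Gker_pol_le {s : ℝ} (hβ : 0 < (N : ℝ) + 2 * s) (u : Euc N → ℝ) {x y : Euc N}
    (hx : (inner ℝ a x : ℝ) ≠ c) (hy : (inner ℝ a y : ℝ) ≠ c) :
    Gker N s a c (polFun a c u) (x, y) ≤ Gker N s a c u (x, y) := by
  have hflip : ∀ z : Euc N, (inner ℝ a z : ℝ) < c → c < (inner ℝ a (reflectH a c z) : ℝ) := by
    intro z h; rw [inner_reflect ha]; linarith
  rcases hx.lt_or_gt with hx' | hx' <;> rcases hy.lt_or_gt with hy' | hy'
  · rw [← Gker_invL ha s (polFun a c u) x y, ← Gker_invL ha s u x y,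
      ← Gker_invR ha s (polFun a c u) (reflectH a c x) y, ← Gker_invR ha s u (reflectH a c x) y]
    exact key_ptwise ha hβ u (hflip x hx') (hflip y hy')
  · rw [← Gker_invL ha s (polFun a c u) x y, ← Gker_invL ha s u x y]
    exact key_ptwise ha hβ u (hflip x hx') hy'
  · rw [← Gker_invR ha s (polFun a c u) x y, ← Gker_invR ha s u x y]
    exact key_ptwise ha hβ u hx' (hflip y hy')
  · exact key_ptwise ha hβ u hx' hy'

lemma measurable_Fker {s : ℝ} (hβ : 0 ≤ (N : ℝ) + 2 * s) {u : Euc N → ℝ} (hu : Measurable u) :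
    Measurable (Fker N s u) := by
  apply Measurable.div
  · exact ((hu.comp measurable_fst).sub (hu.comp measurable_snd)).pow_const 2
  · exact ((Real.continuous_rpow_const hβ).comp
      (continuous_fst.sub continuous_snd).norm).measurable

lemma measurable_polFun {u : Euc N → ℝ} (hu : Measurable u) :
    Measurable (polFun a c u) := by
  unfold polFun
  have hσ : Measurable (reflectH a c) := continuous_reflect.measurable
  refine Measurable.ite ?_ (hu.max (hu.comp hσ)) (hu.min (hu.comp hσ))
  exact measurableSet_lt measurable_const (continuous_const.inner continuous_id).measurable

include ha in
lemma int_T1 {F : Euc N × Euc N → ℝ} (hF : Integrable F) :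
    Integrable (fun p : Euc N × Euc N => F (reflectH a c p.1, p.2)) :=
  ((mp_T1 ha (c := c)).integrable_comp_emb (T1 ha c).measurableEmbedding).2 hF

include ha in
lemma int_T2 {F : Euc N × Euc N → ℝ} (hF : Integrable F) :
    Integrable (fun p : Euc N × Euc N => F (p.1, reflectH a c p.2)) :=
  ((mp_T2 ha (c := c)).integrable_comp_emb (T2 ha c).measurableEmbedding).2 hF

include ha in
lemma int_T3 {F : Euc N × Euc N → ℝ} (hF : Integrable F) :
    Integrable (fun p : Euc N × Euc N => F (reflectH a c p.1, reflectH a c p.2)) :=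
  ((mp_T3 ha (c := c)).integrable_comp_emb (T3 ha c).measurableEmbedding).2 hF

include ha in
lemma integral_T1 (F : Euc N × Euc N → ℝ) :
    ∫ p : Euc N × Euc N, F (reflectH a c p.1, p.2) = ∫ p, F p :=
  (mp_T1 ha (c := c)).integral_comp' F

include ha in
lemma integral_T2 (F : Euc N × Euc N → ℝ) :
    ∫ p : Euc N × Euc N, F (p.1, reflectH a c p.2) = ∫ p, F p :=
  (mp_T2 ha (c := c)).integral_comp' F

include ha in
lemma integral_T3 (F : Euc N × Euc N → ℝ) :
    ∫ p : Euc N × Euc N, F (reflectH a c p.1, reflectH a c p.2) = ∫ p, F p :=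
  (mp_T3 ha (c := c)).integral_comp' F

include ha in
lemma gag_pol {s : ℝ} (hβ : 0 < (N : ℝ) + 2 * s) (u : Euc N → ℝ) (hu : Measurable u)
    (hInt : Integrable (Fker N s u)) :
    Integrable (Fker N s (polFun a c u)) ∧
      ∫ p, Fker N s (polFun a c u) p ≤ ∫ p, Fker N s u p := by
  have h1 := int_T1 (c := c) ha hInt
  have h2 := int_T2 (c := c) ha hInt
  have h3 := int_T3 (c := c) ha hInt
  have hGu_int : Integrable (Gker N s a c u) := ((hInt.add h1).add h2).add h3
  have hae : ∀ᵐ p : Euc N × Euc N, Gker N s a c (polFun a c u) p ≤ Gker N s a c u p := by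
    filter_upwards [offH_ae (c := c) ha] with p hp
    simpa using Gker_pol_le ha hβ u hp.1 hp.2
  have hmpol : Measurable (polFun a c u) := measurable_polFun hu
  have hmF : Measurable (Fker N s (polFun a c u)) := measurable_Fker hβ.le hmpol
  have hGpol_meas : Measurable (Gker N s a c (polFun a c u)) := by
    unfold Gker
    exact ((hmF.add (hmF.comp (T1 ha c).measurable)).add (hmF.comp (T2 ha c).measurable)).add
      (hmF.comp (T3 ha c).measurable)
  have hGpol_int : Integrable (Gker N s a c (polFun a c u)) := by
    refine Integrable.mono' hGu_int hGpol_meas.aestronglyMeasurable ?_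
    filter_upwards [hae] with p hp
    rw [Real.norm_eq_abs, abs_of_nonneg (Gker_nonneg N s a c _ p)]
    exact hp
  have hFpol_int : Integrable (Fker N s (polFun a c u)) := by
    refine Integrable.mono' hGpol_int hmF.aestronglyMeasurable ?_
    apply Filter.Eventually.of_forall
    intro p
    rw [Real.norm_eq_abs, abs_of_nonneg (Fker_nonneg N s _ p)]
    have h2' := Fker_nonneg N s (polFun a c u) (reflectH a c p.1, p.2)
    have h3' := Fker_nonneg N s (polFun a c u) (p.1, reflectH a c p.2)
    have h4' := Fker_nonneg N s (polFun a c u) (reflectH a c p.1, reflectH a c p.2)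
    unfold Gker
    linarith
  refine ⟨hFpol_int, ?_⟩
  have hIGu : ∫ p, Gker N s a c u p = 4 * ∫ p, Fker N s u p := by
    unfold Gker
    have e3 : Integrable (fun p : Euc N × Euc N =>
        Fker N s u p + Fker N s u (reflectH a c p.1, p.2)) := hInt.add h1
    have e4 : Integrable (fun p : Euc N × Euc N =>
        Fker N s u p + Fker N s u (reflectH a c p.1, p.2)
          + Fker N s u (p.1, reflectH a c p.2)) := e3.add h2
    rw [integral_add e4 h3, integral_add e3 h2, integral_add hInt h1,
      integral_T1 (c := c) ha, integral_T2 (c := c) ha, integral_T3 (c := c) ha]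
    ring
  have h1' := int_T1 (c := c) ha hFpol_int
  have h2' := int_T2 (c := c) ha hFpol_int
  have h3' := int_T3 (c := c) ha hFpol_int
  have hIGpol : ∫ p, Gker N s a c (polFun a c u) p
      = 4 * ∫ p, Fker N s (polFun a c u) p := by
    unfold Gker
    have e3 : Integrable (fun p : Euc N × Euc N =>
        Fker N s (polFun a c u) p + Fker N s (polFun a c u) (reflectH a c p.1, p.2)) :=
      hFpol_int.add h1'
    have e4 : Integrable (fun p : Euc N × Euc N =>
        Fker N s (polFun a c u) p + Fker N s (polFun a c u) (reflectH a c p.1, p.2)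
          + Fker N s (polFun a c u) (p.1, reflectH a c p.2)) := e3.add h2'
    rw [integral_add e4 h3', integral_add e3 h2', integral_add hFpol_int h1',
      integral_T1 (c := c) ha, integral_T2 (c := c) ha, integral_T3 (c := c) ha]
    ring
  have hmono := integral_mono_ae hGpol_int hGu_int hae
  rw [hIGu, hIGpol] at hmono
  linarith

include ha in
lemma l2_pol (u : Euc N → ℝ) (hu : Measurable u) (hInt : Integrable (fun x => u x ^ 2)) :
    Integrable (fun x => polFun a c u x ^ 2) ∧
      ∫ x, polFun a c u x ^ 2 = ∫ x, u x ^ 2 := by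
  have hemb := (reflME (c := c) ha).measurableEmbedding
  have hmp := measurePreserving_reflect (c := c) ha
  have hcomp : Integrable (fun x => u (reflectH a c x) ^ 2) :=
    (hmp.integrable_comp_emb hemb).2 hInt
  have hm : Measurable (polFun a c u) := measurable_polFun hu
  have hbound : ∀ x, polFun a c u x ^ 2 ≤ u x ^ 2 + u (reflectH a c x) ^ 2 := by
    intro x
    unfold polFun
    split <;> rcases le_total (u x) (u (reflectH a c x)) with h | h <;>
      simp only [max_eq_right h, max_eq_left h, min_eq_left h, min_eq_right h] <;>
      nlinarith [sq_nonneg (u x), sq_nonneg (u (reflectH a c x))]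
  have hpol_int : Integrable (fun x => polFun a c u x ^ 2) := by
    refine Integrable.mono' (hInt.add hcomp) (hm.pow_const 2).aestronglyMeasurable ?_
    apply Filter.Eventually.of_forall
    intro x
    rw [Real.norm_eq_abs, abs_of_nonneg (sq_nonneg _)]
    exact hbound x
  refine ⟨hpol_int, ?_⟩
  have hcomp_pol : Integrable (fun x => polFun a c u (reflectH a c x) ^ 2) :=
    (hmp.integrable_comp_emb hemb).2 hpol_int
  have haeH : ∀ᵐ x : Euc N, (inner ℝ a x : ℝ) ≠ c := by
    rw [ae_iff]; simpa using hyperplane_null ha (c := c)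
  have hkey : ∀ᵐ x : Euc N, polFun a c u x ^ 2 + polFun a c u (reflectH a c x) ^ 2
      = u x ^ 2 + u (reflectH a c x) ^ 2 := by
    filter_upwards [haeH] with x hx
    rcases hx.lt_or_gt with hx' | hx'
    · rw [polFun_of_neg u hx', polFun_reflect_of_neg ha u hx']
      rw [add_comm (min _ _ ^ 2), sq_max_add_sq_min]
    · rw [polFun_of_pos u hx', polFun_reflect_of_pos ha u hx', sq_max_add_sq_min]
  have h1 : ∫ x, (polFun a c u x ^ 2 + polFun a c u (reflectH a c x) ^ 2)
      = ∫ x, (u x ^ 2 + u (reflectH a c x) ^ 2) := integral_congr_ae hkey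
  rw [integral_add hpol_int hcomp_pol, integral_add hInt hcomp] at h1
  have h2 : ∫ x, polFun a c u (reflectH a c x) ^ 2 = ∫ x, polFun a c u x ^ 2 :=
    hmp.integral_comp hemb (fun y => polFun a c u y ^ 2)
  have h3 : ∫ x, u (reflectH a c x) ^ 2 = ∫ x, u x ^ 2 :=
    hmp.integral_comp hemb (fun y => u y ^ 2)
  rw [h2, h3] at h1
  linarith

end Machinery

section Congruence
variable {N : ℕ} {a : Euc N} {c : ℝ} (ha : ‖a‖ = 1)

lemma Fker_congr {s : ℝ} {u v : Euc N → ℝ} (h : u =ᵐ[volume] v) :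
    Fker N s u =ᵐ[volume] Fker N s v := by
  filter_upwards [ae_fst (P := fun x => u x = v x) h, ae_snd (P := fun x => u x = v x) h]
    with p h1 h2
  simp only [Fker, h1, h2]

include ha in
lemma polFun_congr {u v : Euc N → ℝ} (h : u =ᵐ[volume] v) :
    polFun a c u =ᵐ[volume] polFun a c v := by
  have h2 : (fun x => u (reflectH a c x)) =ᵐ[volume] fun x => v (reflectH a c x) :=
    (measurePreserving_reflect (c := c) ha).quasiMeasurePreserving.ae_eq_comp h
  filter_upwards [h, h2] with x h1 h2
  simp only [polFun, h1, h2]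

end Congruence

/-- For `s ∈ (0,1)` and nonnegative `φ ∈ H^s(ℝ^N)`, one has
`‖φ_H‖²_{H^s} ≤ ‖φ‖²_{H^s}` (L² part plus Gagliardo part); in particular
`φ_H ∈ H^s(ℝ^N)`. -/
theorem hsNorm_polarization_le
    {N : ℕ} (s : ℝ) (hs : s ∈ Set.Ioo (0 : ℝ) 1)
    (a : Euc N) (c : ℝ) (ha : ‖a‖ = 1)
    (φ : Euc N → ℝ) (hφ : memHs N s φ) (hφ0 : ∀ x, 0 ≤ φ x) :
    ((∫ x : Euc N, (polFun a c φ x) ^ 2) + gagliardo2 N s (polFun a c φ)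
      ≤ (∫ x : Euc N, (φ x) ^ 2) + gagliardo2 N s φ) ∧
    memHs N s (polFun a c φ) := by
  obtain ⟨hL2, hGag⟩ := hφ
  have hβ : 0 < (N : ℝ) + 2 * s := by have := hs.1; positivity
  obtain ⟨g, hgsm, hge⟩ := hL2.aestronglyMeasurable
  have hg : Measurable g := hgsm.measurable
  have hφ2 : Integrable (fun x => φ x ^ 2) :=
    (memLp_two_iff_integrable_sq hL2.aestronglyMeasurable).1 hL2
  have hg2 : Integrable (fun x => g x ^ 2) :=
    hφ2.congr (hge.mono fun x hx => by simp only [hx])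
  have hFg : Integrable (Fker N s g) := by
    have h0 : Integrable (Fker N s φ) := hGag
    exact h0.congr (Fker_congr hge)
  obtain ⟨hG_int_g, hG_le_g⟩ := gag_pol ha hβ g hg hFg
  obtain ⟨hL_int_g, hL_eq_g⟩ := l2_pol ha g hg hg2
  have hpe : polFun a c φ =ᵐ[volume] polFun a c g := polFun_congr ha hge
  have hsq : (fun x => polFun a c φ x ^ 2) =ᵐ[volume] fun x => polFun a c g x ^ 2 :=
    hpe.mono fun x hx => by simp only [hx]
  have hFpe : Fker N s (polFun a c φ) =ᵐ[volume] Fker N s (polFun a c g) := Fker_congr hpe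
  constructor
  · have e1 : ∫ x, polFun a c φ x ^ 2 = ∫ x, polFun a c g x ^ 2 := integral_congr_ae hsq
    have e2 : ∫ x, φ x ^ 2 = ∫ x, g x ^ 2 :=
      integral_congr_ae (hge.mono fun x hx => by simp only [hx])
    have e3 : gagliardo2 N s (polFun a c φ) = ∫ p, Fker N s (polFun a c g) p :=
      integral_congr_ae hFpe
    have e4 : gagliardo2 N s φ = ∫ p, Fker N s g p := integral_congr_ae (Fker_congr hge)
    rw [e1, e2, e3, e4]
    linarith
  · constructor
    · have hmeas : AEStronglyMeasurable (polFun a c φ) volume :=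
        (measurable_polFun hg).aestronglyMeasurable.congr hpe.symm
      exact (memLp_two_iff_integrable_sq hmeas).2 (hL_int_g.congr hsq.symm)
    · exact hG_int_g.congr hFpe.symm
end
end

section
/- Let s ∈ (0,1), H an open affine half-space in R^N, and Ω ⊂ R^N a bounded domain with Ω_H = Ω. If φ ∈ H^s_0(Ω) is nonnegative, then its polarization φ_H belongs to H^s_0(Ω), i.e., φ_H ∈ H^s(R^N) and φ_H = 0 almost everywhere in Ω^c. -/
open MeasureTheory Set
open scoped ENNReal
noncomputable section

section Aux

variable {N : ℕ}

/-- The linear part of the reflection, as a linear map. -/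
def reflLin (a : Euc N) : Euc N →ₗ[ℝ] Euc N where
  toFun x := x - (2 * (inner ℝ a x : ℝ)) • a
  map_add' x y := by
    simp only [inner_add_right]
    module
  map_smul' r x := by
    simp only [inner_smul_right, RingHom.id_apply]
    module

lemma inner_reflLin (a : Euc N) (ha : ‖a‖ = 1) (x : Euc N) :
    (inner ℝ a (reflLin a x) : ℝ) = - (inner ℝ a x : ℝ) := by
  have haa : (inner ℝ a a : ℝ) = 1 := by
    rw [real_inner_self_eq_norm_sq, ha]; norm_num
  simp only [reflLin, LinearMap.coe_mk, AddHom.coe_mk, inner_sub_right, inner_smul_right, haa]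
  ring

lemma reflLin_involutive (a : Euc N) (ha : ‖a‖ = 1) :
    Function.Involutive (reflLin a) := by
  intro x
  have h := inner_reflLin a ha x
  simp only [reflLin, LinearMap.coe_mk, AddHom.coe_mk] at h ⊢
  rw [h]
  module

lemma norm_reflLin (a : Euc N) (ha : ‖a‖ = 1) (x : Euc N) :
    ‖reflLin a x‖ = ‖x‖ := by
  have h2 : ‖reflLin a x‖ ^ 2 = ‖x‖ ^ 2 := by
    simp only [reflLin, LinearMap.coe_mk, AddHom.coe_mk]
    rw [@norm_sub_sq_real, norm_smul, inner_smul_right, real_inner_comm x a,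
      Real.norm_eq_abs, mul_pow, sq_abs, ha]
    ring
  have h3 := congrArg Real.sqrt h2
  rwa [Real.sqrt_sq (norm_nonneg _), Real.sqrt_sq (norm_nonneg _)] at h3

/-- The linear reflection as a linear isometry equivalence. -/
def reflIso (a : Euc N) (ha : ‖a‖ = 1) : Euc N ≃ₗᵢ[ℝ] Euc N :=
  ⟨LinearEquiv.ofInvolutive (reflLin a) (reflLin_involutive a ha), norm_reflLin a ha⟩

lemma reflectH_eq (a : Euc N) (c : ℝ) :
    reflectH a c = (fun z => z + (2 * c) • a) ∘ (reflLin a) := by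
  funext x
  simp only [reflectH, Function.comp_apply, reflLin, LinearMap.coe_mk, AddHom.coe_mk]
  module

lemma measurePreserving_reflectH (a : Euc N) (c : ℝ) (ha : ‖a‖ = 1) :
    MeasurePreserving (reflectH a c) (volume : Measure (Euc N)) volume := by
  rw [reflectH_eq]
  have h1 : MeasurePreserving (reflIso a ha) (volume : Measure (Euc N)) volume :=
    (reflIso a ha).measurePreserving
  have h2 : (reflIso a ha : Euc N → Euc N) = reflLin a := rfl
  rw [h2] at h1
  exact (measurePreserving_add_right volume ((2 * c) • a)).comp h1

lemma inner_reflectH (a : Euc N) (c : ℝ) (ha : ‖a‖ = 1) (x : Euc N) :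
    (inner ℝ a (reflectH a c x) : ℝ) = 2 * c - (inner ℝ a x : ℝ) := by
  have haa : (inner ℝ a a : ℝ) = 1 := by
    rw [real_inner_self_eq_norm_sq, ha]; norm_num
  simp only [reflectH, inner_sub_right, inner_smul_right, haa]
  ring

lemma reflectH_involutive (a : Euc N) (c : ℝ) (ha : ‖a‖ = 1) :
    Function.Involutive (reflectH a c) := by
  intro x
  have h := inner_reflectH a c ha x
  simp only [reflectH] at h ⊢
  rw [h]
  module

lemma reflectH_sub (a : Euc N) (c : ℝ) (x y : Euc N) :
    reflectH a c x - reflectH a c y = reflLin a (x - y) := by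
  simp only [reflectH, reflLin, LinearMap.coe_mk, AddHom.coe_mk, inner_sub_right]
  module

lemma norm_reflectH_sub (a : Euc N) (c : ℝ) (ha : ‖a‖ = 1) (x y : Euc N) :
    ‖reflectH a c x - reflectH a c y‖ = ‖x - y‖ := by
  rw [reflectH_sub, norm_reflLin a ha]

lemma norm_reflectH_sub' (a : Euc N) (c : ℝ) (ha : ‖a‖ = 1) (x y : Euc N) :
    ‖reflectH a c x - y‖ = ‖x - reflectH a c y‖ := by
  conv_lhs => rw [← reflectH_involutive a c ha y]
  rw [norm_reflectH_sub a c ha]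

lemma normsq_sub_reflectH (a : Euc N) (c : ℝ) (ha : ‖a‖ = 1) (x y : Euc N) :
    ‖x - reflectH a c y‖ ^ 2
      = ‖x - y‖ ^ 2 + 4 * ((inner ℝ a x : ℝ) - c) * ((inner ℝ a y : ℝ) - c) := by
  have hxy : x - reflectH a c y = (x - y) + (2 * ((inner ℝ a y : ℝ) - c)) • a := by
    simp only [reflectH]; module
  rw [hxy, @norm_add_sq_real, real_inner_smul_right, inner_sub_left, real_inner_comm x a,
    real_inner_comm y a, norm_smul, Real.norm_eq_abs, mul_pow, sq_abs, ha]
  ring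

lemma norm_sub_reflectH_le (a : Euc N) (c : ℝ) (ha : ‖a‖ = 1) {x y : Euc N}
    (h : ((inner ℝ a x : ℝ) - c) * ((inner ℝ a y : ℝ) - c) ≤ 0) :
    ‖x - reflectH a c y‖ ≤ ‖x - y‖ := by
  have h2 : ‖x - reflectH a c y‖ ^ 2 ≤ ‖x - y‖ ^ 2 := by
    rw [normsq_sub_reflectH a c ha]
    nlinarith
  have h3 := Real.sqrt_le_sqrt h2
  rwa [Real.sqrt_sq (norm_nonneg _), Real.sqrt_sq (norm_nonneg _)] at h3

lemma polFun_choice (a : Euc N) (c : ℝ) (f : Euc N → ℝ) (x : Euc N) :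
    polFun a c f x = f x ∨ polFun a c f x = f (reflectH a c x) := by
  unfold polFun
  split_ifs
  · exact max_choice _ _
  · exact min_choice _ _

/-- Key pointwise inequality dominating the polarized Gagliardo integrand. -/
lemma polFun_gagliardo_pointwise (a : Euc N) (c : ℝ) (ha : ‖a‖ = 1) (f : Euc N → ℝ)
    {q : ℝ} (hq : 0 ≤ q) (x y : Euc N) :
    (polFun a c f x - polFun a c f y) ^ 2 / ‖x - y‖ ^ q
      ≤ (f x - f y) ^ 2 / ‖x - y‖ ^ q
        + (f (reflectH a c x) - f (reflectH a c y)) ^ 2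
            / ‖reflectH a c x - reflectH a c y‖ ^ q
        + (f x - f (reflectH a c y)) ^ 2 / ‖x - reflectH a c y‖ ^ q
        + (f (reflectH a c x) - f y) ^ 2 / ‖reflectH a c x - y‖ ^ q := by
  set σ := reflectH a c with hσdef
  rw [norm_reflectH_sub a c ha, norm_reflectH_sub' a c ha]
  rcases eq_or_ne x y with rfl | hxy
  · simp only [sub_self, ne_eq, OfNat.ofNat_ne_zero, not_false_eq_true, zero_pow, zero_div]
    positivity
  have hd : (0:ℝ) < ‖x - y‖ := by
    rw [norm_pos_iff, sub_ne_zero]; exact hxy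
  have hdq : (0:ℝ) < ‖x - y‖ ^ q := Real.rpow_pos_of_pos hd q
  have hcross : ∀ z w : Euc N, ‖z - w‖ ≤ ‖x - y‖ →
      (f z - f w) ^ 2 / ‖x - y‖ ^ q ≤ (f z - f w) ^ 2 / ‖z - w‖ ^ q := by
    intro z w hle
    rcases eq_or_ne z w with rfl | hzw
    · simp
    · have h0 : (0:ℝ) < ‖z - w‖ := by rw [norm_pos_iff, sub_ne_zero]; exact hzw
      exact div_le_div_of_nonneg_left (sq_nonneg _) (Real.rpow_pos_of_pos h0 q)
        (Real.rpow_le_rpow (norm_nonneg _) hle hq)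
  have hAnn : (0:ℝ) ≤ (f x - f y) ^ 2 / ‖x - y‖ ^ q := by positivity
  have hBnn : (0:ℝ) ≤ (f (σ x) - f (σ y)) ^ 2 / ‖x - y‖ ^ q := by positivity
  have hCnn : (0:ℝ) ≤ (f x - f (σ y)) ^ 2 / ‖x - σ y‖ ^ q := by positivity
  have hDnn : (0:ℝ) ≤ (f (σ x) - f y) ^ 2 / ‖x - σ y‖ ^ q := by positivity
  have hsame : ∀ M : ℝ, |M| ≤ max |f x - f y| |f (σ x) - f (σ y)| →
      M ^ 2 / ‖x - y‖ ^ q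
        ≤ (f x - f y) ^ 2 / ‖x - y‖ ^ q + (f (σ x) - f (σ y)) ^ 2 / ‖x - y‖ ^ q
          + (f x - f (σ y)) ^ 2 / ‖x - σ y‖ ^ q + (f (σ x) - f y) ^ 2 / ‖x - σ y‖ ^ q := by
    intro M hM
    have h2 : M ^ 2 ≤ (f x - f y) ^ 2 + (f (σ x) - f (σ y)) ^ 2 := by
      have h3 : |M| ^ 2 ≤ (max |f x - f y| |f (σ x) - f (σ y)|) ^ 2 :=
        pow_le_pow_left₀ (abs_nonneg _) hM 2
      rw [sq_abs] at h3
      refine h3.trans ?_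
      rcases max_cases |f x - f y| |f (σ x) - f (σ y)| with ⟨h4, _⟩ | ⟨h4, _⟩ <;>
        rw [h4, sq_abs]
      · exact le_add_of_nonneg_right (sq_nonneg _)
      · exact le_add_of_nonneg_left (sq_nonneg _)
    have h5 : M ^ 2 / ‖x - y‖ ^ q
        ≤ ((f x - f y) ^ 2 + (f (σ x) - f (σ y)) ^ 2) / ‖x - y‖ ^ q :=
      (div_le_div_iff_of_pos_right hdq).2 h2
    rw [add_div] at h5
    linarith
  have hmixed : ((inner ℝ a x : ℝ) - c) * ((inner ℝ a y : ℝ) - c) ≤ 0 →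
      ∀ M : ℝ, (M = f x - f y ∨ M = f (σ x) - f (σ y)) ∨
        (M = f x - f (σ y) ∨ M = f (σ x) - f y) →
      M ^ 2 / ‖x - y‖ ^ q
        ≤ (f x - f y) ^ 2 / ‖x - y‖ ^ q + (f (σ x) - f (σ y)) ^ 2 / ‖x - y‖ ^ q
          + (f x - f (σ y)) ^ 2 / ‖x - σ y‖ ^ q + (f (σ x) - f y) ^ 2 / ‖x - σ y‖ ^ q := by
    intro hprod M hM
    have hk : ‖x - σ y‖ ≤ ‖x - y‖ := norm_sub_reflectH_le a c ha hprod
    have hk' : ‖σ x - y‖ ≤ ‖x - y‖ := by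
      rw [norm_reflectH_sub' a c ha]; exact hk
    rcases hM with (rfl | rfl) | (rfl | rfl)
    · linarith
    · linarith
    · have := hcross x (σ y) hk
      linarith
    · have h6 := hcross (σ x) y hk'
      rw [norm_reflectH_sub' a c ha] at h6
      linarith
  by_cases hx : c < (inner ℝ a x : ℝ) <;> by_cases hy : c < (inner ℝ a y : ℝ)
  · simp only [polFun, if_pos hx, if_pos hy, ← hσdef]
    exact hsame _ (abs_max_sub_max_le_max _ _ _ _)
  · simp only [polFun, if_pos hx, if_neg hy, ← hσdef]
    have hprod : ((inner ℝ a x : ℝ) - c) * ((inner ℝ a y : ℝ) - c) ≤ 0 :=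
      mul_nonpos_of_nonneg_of_nonpos (by linarith) (by push_neg at hy; linarith)
    refine hmixed hprod _ ?_
    rcases max_choice (f x) (f (σ x)) with h1 | h1 <;>
      rcases min_choice (f y) (f (σ y)) with h2 | h2 <;> rw [h1, h2]
    · exact Or.inl (Or.inl rfl)
    · exact Or.inr (Or.inl rfl)
    · exact Or.inr (Or.inr rfl)
    · exact Or.inl (Or.inr rfl)
  · simp only [polFun, if_neg hx, if_pos hy, ← hσdef]
    have hprod : ((inner ℝ a x : ℝ) - c) * ((inner ℝ a y : ℝ) - c) ≤ 0 :=
      mul_nonpos_of_nonpos_of_nonneg (by push_neg at hx; linarith) (by linarith)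
    refine hmixed hprod _ ?_
    rcases min_choice (f x) (f (σ x)) with h1 | h1 <;>
      rcases max_choice (f y) (f (σ y)) with h2 | h2 <;> rw [h1, h2]
    · exact Or.inl (Or.inl rfl)
    · exact Or.inr (Or.inl rfl)
    · exact Or.inr (Or.inr rfl)
    · exact Or.inl (Or.inr rfl)
  · simp only [polFun, if_neg hx, if_neg hy, ← hσdef]
    exact hsame _ (abs_min_sub_min_le_max _ _ _ _)

end Aux

/-- If `Ω` is a bounded domain with `Ω_H = Ω` and `φ ∈ H^s_0(Ω)`
is nonnegative, then `φ_H ∈ H^s_0(Ω)`: `φ_H ∈ H^s(ℝ^N)` and `φ_H = 0` a.e. in `Ω^c`. -/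
theorem polarization_mem_Hs0
    {N : ℕ} (s : ℝ) (hs : s ∈ Set.Ioo (0 : ℝ) 1)
    (a : Euc N) (c : ℝ) (ha : ‖a‖ = 1)
    (Ω : Set (Euc N)) (hΩopen : IsOpen Ω) (hΩconn : IsConnected Ω)
    (hΩbdd : Bornology.IsBounded Ω) (hpol : polSet a c Ω = Ω)
    (φ : Euc N → ℝ) (hφ : memHs0 N s Ω φ) (hφ0 : ∀ x, 0 ≤ φ x) :
    memHs N s (polFun a c φ) ∧
    ∀ᵐ x : Euc N, x ∉ Ω → polFun a c φ x = 0 := by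
  have hσ : MeasurePreserving (reflectH a c) (volume : Measure (Euc N)) volume :=
    measurePreserving_reflectH a c ha
  have hσinv := reflectH_involutive a c ha
  -- vanishing outside Ω (pointwise)
  have hvanish : ∀ x ∉ Ω, polFun a c φ x = 0 := by
    intro x hx
    have hφx : φ x = 0 := hφ.2 x hx
    unfold polFun
    split_ifs with h
    · -- x ∈ H; then σ x ∉ Ω as well
      have hσx : reflectH a c x ∉ Ω := by
        intro hmem
        apply hx
        rw [← hpol]
        refine Or.inl ⟨Or.inr ⟨reflectH a c x, hmem, hσinv x⟩, h⟩
      rw [hφx, hφ.2 _ hσx]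
      simp
    · rw [hφx]
      exact min_eq_left (hφ0 _)
  -- a measurable representative of φ
  have hφm := hφ.1.1.aestronglyMeasurable
  set ψ := hφm.mk φ with hψdef
  have hψmeas : Measurable ψ := hφm.stronglyMeasurable_mk.measurable
  have hψae : φ =ᵐ[volume] ψ := hφm.ae_eq_mk
  have hψae' : (fun x => φ (reflectH a c x)) =ᵐ[volume] fun x => ψ (reflectH a c x) :=
    hσ.quasiMeasurePreserving.ae_eq hψae
  have hinner : Continuous fun x : Euc N => (inner ℝ a x : ℝ) :=
    continuous_const.inner continuous_id
  have hHmeas : MeasurableSet {x : Euc N | c < (inner ℝ a x : ℝ)} :=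
    measurableSet_lt measurable_const hinner.measurable
  have hpolψ : Measurable (polFun a c ψ) := by
    unfold polFun
    exact Measurable.ite hHmeas
      (hψmeas.max (hψmeas.comp hσ.measurable))
      (hψmeas.min (hψmeas.comp hσ.measurable))
  have hUae : polFun a c φ =ᵐ[volume] polFun a c ψ := by
    filter_upwards [hψae, hψae'] with x e1 e2
    unfold polFun
    rw [e1, e2]
  have hUm : AEStronglyMeasurable (polFun a c φ) (volume : Measure (Euc N)) :=
    ⟨polFun a c ψ, hpolψ.stronglyMeasurable, hUae⟩
  -- polFun bounds
  have hUnn : ∀ x, 0 ≤ polFun a c φ x := by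
    intro x
    rcases polFun_choice a c φ x with h | h <;> rw [h]
    · exact hφ0 x
    · exact hφ0 _
  have hUle : ∀ x, polFun a c φ x ≤ φ x + φ (reflectH a c x) := by
    intro x
    rcases polFun_choice a c φ x with h | h <;> rw [h]
    · exact le_add_of_nonneg_right (hφ0 _)
    · exact le_add_of_nonneg_left (hφ0 _)
  -- MemLp
  have hφσmem : MemLp (fun x => φ (reflectH a c x)) 2 (volume : Measure (Euc N)) :=
    hφ.1.1.comp_measurePreserving hσ
  have hsum : MemLp (fun x => φ x + φ (reflectH a c x)) 2 (volume : Measure (Euc N)) :=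
    hφ.1.1.add hφσmem
  have hUmem : MemLp (polFun a c φ) 2 (volume : Measure (Euc N)) := by
    refine hsum.of_le hUm (Filter.Eventually.of_forall fun x => ?_)
    rw [Real.norm_eq_abs, Real.norm_eq_abs, abs_of_nonneg (hUnn x),
      abs_of_nonneg (add_nonneg (hφ0 x) (hφ0 _))]
    exact hUle x
  -- Gagliardo seminorm
  set q : ℝ := (N : ℝ) + 2 * s with hqdef
  have hq0 : 0 ≤ q := by
    have := hs.1
    positivity
  set F : Euc N × Euc N → ℝ :=
    fun p => (φ p.1 - φ p.2) ^ 2 / ‖p.1 - p.2‖ ^ q with hFdef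
  have hF : Integrable F (volume : Measure (Euc N × Euc N)) := hφ.1.2
  have hvol : (volume : Measure (Euc N × Euc N))
      = (volume : Measure (Euc N)).prod volume := rfl
  have hT2 : MeasurePreserving (Prod.map (reflectH a c) (reflectH a c))
      (volume : Measure (Euc N × Euc N)) volume := by
    rw [hvol]; exact hσ.prod hσ
  have hT3 : MeasurePreserving (Prod.map (id : Euc N → Euc N) (reflectH a c))
      (volume : Measure (Euc N × Euc N)) volume := by
    rw [hvol]; exact (MeasurePreserving.id volume).prod hσ
  have hT4 : MeasurePreserving (Prod.map (reflectH a c) (id : Euc N → Euc N))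
      (volume : Measure (Euc N × Euc N)) volume := by
    rw [hvol]; exact hσ.prod (MeasurePreserving.id volume)
  have hF2 : Integrable (F ∘ Prod.map (reflectH a c) (reflectH a c))
      (volume : Measure (Euc N × Euc N)) :=
    (hT2.integrable_comp hF.aestronglyMeasurable).2 hF
  have hF3 : Integrable (F ∘ Prod.map (id : Euc N → Euc N) (reflectH a c))
      (volume : Measure (Euc N × Euc N)) :=
    (hT3.integrable_comp hF.aestronglyMeasurable).2 hF
  have hF4 : Integrable (F ∘ Prod.map (reflectH a c) (id : Euc N → Euc N))
      (volume : Measure (Euc N × Euc N)) :=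
    (hT4.integrable_comp hF.aestronglyMeasurable).2 hF
  have hGm : AEStronglyMeasurable
      (fun p : Euc N × Euc N => (polFun a c φ p.1 - polFun a c φ p.2) ^ 2 / ‖p.1 - p.2‖ ^ q)
      (volume : Measure (Euc N × Euc N)) := by
    rw [hvol]
    have h1 : (fun p : Euc N × Euc N => polFun a c φ p.1)
        =ᵐ[(volume : Measure (Euc N)).prod volume] fun p => polFun a c ψ p.1 :=
      Measure.quasiMeasurePreserving_fst.ae_eq hUae
    have h2 : (fun p : Euc N × Euc N => polFun a c φ p.2)
        =ᵐ[(volume : Measure (Euc N)).prod volume] fun p => polFun a c ψ p.2 :=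
      Measure.quasiMeasurePreserving_snd.ae_eq hUae
    have hg : Measurable fun p : Euc N × Euc N =>
        (polFun a c ψ p.1 - polFun a c ψ p.2) ^ 2 / ‖p.1 - p.2‖ ^ q := by
      have hden : Continuous fun p : Euc N × Euc N => ‖p.1 - p.2‖ ^ q := by
        apply Continuous.rpow_const (continuous_fst.sub continuous_snd).norm
        intro p
        exact Or.inr hq0
      exact (((hpolψ.comp measurable_fst).sub (hpolψ.comp measurable_snd)).pow_const 2).div
        hden.measurable
    refine ⟨_, hg.stronglyMeasurable, ?_⟩
    filter_upwards [h1, h2] with p e1 e2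
    rw [e1, e2]
  have hGag : gagliardoFinite N s (polFun a c φ) := by
    unfold gagliardoFinite
    refine Integrable.mono' (((hF.add hF2).add hF3).add hF4) hGm
      (Filter.Eventually.of_forall fun p => ?_)
    have hkey := polFun_gagliardo_pointwise a c ha φ hq0 p.1 p.2
    have hnn : (0:ℝ) ≤ (polFun a c φ p.1 - polFun a c φ p.2) ^ 2 / ‖p.1 - p.2‖ ^ q := by
      positivity
    rw [Real.norm_eq_abs, abs_of_nonneg hnn]
    simpa [hFdef, Pi.add_apply, Function.comp, Prod.map] using hkey
  exact ⟨⟨hUmem, hGag⟩, Filter.Eventually.of_forall hvanish⟩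
end
end
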